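/- arXiv:1404.1328 — 5 statements merged into one kernel-verified Lean document; each statement's English description precedes it below -/
import Mathlib

section
/- (Suboptimality of [0, α2 − α1]): With bimodal execution time and two machines, the policy with starting times [0, α2 − α1] achieves the same expected completion time as the single-machine policy [0] (namely α1 p1 + α2 p2) but strictly larger expected machine time whenever p2 > 0 and α2 > α1. Hence any policy starting the second machine at a time t2 with α2 − α1 ≤ t2 < α2 is dominated by not using the second machine. -/
/-!
Once `t2 ≥ α2 - α1`, the second machine can never finish first: `X1 ≤ α2 ≤ t2 + α1 ≤ t2 + X2`.
So `T = X1` on every atom and `E[T]` is that of the single-machine policy, while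
`C - T = (X1 - t2)⁺` is positive on the atom `X1 = α2` (as `t2 < α2`), which has mass `p2 > 0`.
-/

/-- Expectation over the four atoms of (X1, X2), i.i.d. bimodal
(α1 w.p. p1, α2 w.p. p2). -/
def Ebim (p1 p2 α1 α2 : ℝ) (g : ℝ → ℝ → ℝ) : ℝ :=
  p1 * p1 * g α1 α1 + p1 * p2 * g α1 α2 + p2 * p1 * g α2 α1 + p2 * p2 * g α2 α2

section Ebim

variable {p1 p2 α1 α2 : ℝ}

theorem Ebim_congr {g g' : ℝ → ℝ → ℝ}
    (h : ∀ x1 ∈ ({α1, α2} : Set ℝ), ∀ x2 ∈ ({α1, α2} : Set ℝ), g x1 x2 = g' x1 x2) :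
    Ebim p1 p2 α1 α2 g = Ebim p1 p2 α1 α2 g' := by
  simp only [Ebim, Set.mem_insert_iff, Set.mem_singleton_iff] at h ⊢
  simp [h]

theorem Ebim_fst (hp : p1 + p2 = 1) (f : ℝ → ℝ) :
    Ebim p1 p2 α1 α2 (fun x1 _ => f x1) = p1 * f α1 + p2 * f α2 := by
  rw [Ebim, ← mul_one (p1 * f α1), ← mul_one (p2 * f α2), ← hp]
  ring

end Ebim

theorem min_add_eq_left_of_sub_le {α1 α2 t2 x1 x2 : ℝ} (ht : α2 - α1 ≤ t2)
    (hx1 : x1 ≤ α2) (hx2 : α1 ≤ x2) : min x1 (t2 + x2) = x1 :=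
  min_eq_left (by linarith)

theorem stmt_6_general (α1 α2 p1 p2 : ℝ) (hα : α1 < α2)
    (hp1 : 0 < p1) (hp1' : p1 < 1) (hp2 : p2 = 1 - p1) :
    ∀ t2 : ℝ, α2 - α1 ≤ t2 → t2 < α2 →
      Ebim p1 p2 α1 α2 (fun x1 x2 => min x1 (t2 + x2)) = α1 * p1 + α2 * p2 ∧
      Ebim p1 p2 α1 α2
          (fun x1 x2 => min x1 (t2 + x2) + max (min x1 (t2 + x2) - t2) 0)
        > α1 * p1 + α2 * p2 := by
  intro t2 ht1 ht2
  have hp : p1 + p2 = 1 := by linarith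
  have hT : ∀ x1 ∈ ({α1, α2} : Set ℝ), ∀ x2 ∈ ({α1, α2} : Set ℝ),
      min x1 (t2 + x2) = x1 := by
    rintro x1 hx1 x2 hx2
    simp only [Set.mem_insert_iff, Set.mem_singleton_iff] at hx1 hx2
    apply min_add_eq_left_of_sub_le ht1 <;> rcases hx1 with rfl | rfl <;>
      rcases hx2 with rfl | rfl <;> linarith
  constructor
  · rw [Ebim_congr (g' := fun x1 _ => x1) hT, Ebim_fst hp]
    ring
  · rw [Ebim_congr (g' := fun x1 _ => x1 + max (x1 - t2) 0)
        (fun x1 hx1 x2 hx2 => by rw [hT x1 hx1 x2 hx2]), Ebim_fst hp,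
      max_eq_left (sub_nonneg.mpr ht2.le)]
    have hwait : 0 ≤ p1 * max (α1 - t2) 0 := mul_nonneg hp1.le (le_max_right _ _)
    have hlate : 0 < p2 * (α2 - t2) := mul_pos (by linarith) (sub_pos.mpr ht2)
    linarith

/-- Suboptimality of [0, α2 - α1]: for any t2 with α2 - α1 ≤ t2 < α2 (in
particular t2 = α2 - α1), the policy [0, t2] has the same expected completion
time α1 p1 + α2 p2 as the single-machine policy [0], but strictly larger
expected machine time (C = T + (T - t2)⁺) whenever p2 > 0 and α1 < α2.
Hence it is dominated by not using the second machine. -/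
theorem stmt_6 (α1 α2 p1 p2 : ℝ) (hα1 : 0 < α1) (hα : α1 < α2)
    (hp1 : 0 < p1) (hp1' : p1 < 1) (hp2 : p2 = 1 - p1) :
    ∀ t2 : ℝ, α2 - α1 ≤ t2 → t2 < α2 →
      Ebim p1 p2 α1 α2 (fun x1 x2 => min x1 (t2 + x2)) = α1 * p1 + α2 * p2 ∧
      Ebim p1 p2 α1 α2
          (fun x1 x2 => min x1 (t2 + x2) + max (min x1 (t2 + x2) - t2) 0)
        > α1 * p1 + α2 * p2 :=
  stmt_6_general α1 α2 p1 p2 hα hp1 hp1' hp2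
end

section
/- For a single task with two machines and bimodal execution time, any starting time t2 ∈ (0, α1) for the second machine is dominated: the point (E[C([0,t2])], E[T([0,t2])]) lies on the line segment between those of [0,0] and [0,α1], since both E[T] and E[C] are affine functions of t2 on [0, α1] (assuming α1 + t2 < α2 throughout this interval, i.e., 2α1 < α2). -/
/-!
On `[0, α1]` the makespan `min x1 (t2 + x2)` is affine in `t2` at each of the four atoms:
its kink sits at `t2 = x1 - x2 ∈ {0, α1 - α2, α2 - α1}`, and none of these lies in `(0, α1)`
because `2 α1 < α2`. Since `t2 ≤ min x1 (t2 + x2)` there, the cost is `2 min x1 (t2 + x2) - t2`,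
affine as well. Expectation is linear, so both expectations at `t2` are the convex combination
with weight `t2 / α1` of their values at `0` and at `α1`.
-/

open Set

theorem Ebim_combo_of_atoms {p1 p2 α1 α2 θ : ℝ} {g g₀ g₁ : ℝ → ℝ → ℝ}
    (h : ∀ x1 ∈ ({α1, α2} : Set ℝ), ∀ x2 ∈ ({α1, α2} : Set ℝ),
      g x1 x2 = (1 - θ) * g₀ x1 x2 + θ * g₁ x1 x2) :
    Ebim p1 p2 α1 α2 g = (1 - θ) * Ebim p1 p2 α1 α2 g₀ + θ * Ebim p1 p2 α1 α2 g₁ := by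
  have h₁ : α1 ∈ ({α1, α2} : Set ℝ) := mem_insert _ _
  have h₂ : α2 ∈ ({α1, α2} : Set ℝ) := mem_insert_of_mem _ rfl
  simp only [Ebim]
  rw [h _ h₁ _ h₁, h _ h₁ _ h₂, h _ h₂ _ h₁, h _ h₂ _ h₂]
  ring

theorem apply_combo_of_affine_on_Icc {f : ℝ → ℝ} {a b m k θ : ℝ} (hab : a ≤ b) (hθ : θ ∈ Icc (0 : ℝ) 1)
    (hf : ∀ s ∈ Icc a b, f s = m * s + k) :
    f ((1 - θ) * a + θ * b) = (1 - θ) * f a + θ * f b := by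
  have hs : (1 - θ) * a + θ * b ∈ Icc a b := by
    constructor <;> nlinarith [hθ.1, hθ.2]
  rw [hf _ hs, hf a (left_mem_Icc.2 hab), hf b (right_mem_Icc.2 hab)]
  ring

theorem exists_affine_min_add {a b c d : ℝ} (h : c ≤ a + d ∨ b + d ≤ c) :
    ∃ m k : ℝ, ∀ s ∈ Icc a b, min c (s + d) = m * s + k := by
  rcases h with h | h
  · exact ⟨0, c, fun s hs => by rw [min_eq_left (by linarith [hs.1])]; ring⟩
  · exact ⟨1, d, fun s hs => by rw [min_eq_right (by linarith [hs.2])]; ring⟩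

theorem exists_affine_min_add_add_max {a b c d : ℝ} (hd : 0 ≤ d) (hbc : b ≤ c)
    (h : c ≤ a + d ∨ b + d ≤ c) :
    ∃ m k : ℝ, ∀ s ∈ Icc a b, min c (s + d) + max (min c (s + d) - s) 0 = m * s + k := by
  obtain ⟨m, k, hmk⟩ := exists_affine_min_add h
  refine ⟨2 * m - 1, 2 * k, fun s hs => ?_⟩
  have hs_le : s ≤ min c (s + d) := le_min (hs.2.trans hbc) (by linarith)
  rw [max_eq_left (by linarith), hmk s hs]
  ring

theorem stmt_10_general (α1 α2 p1 p2 : ℝ) (hα : 2 * α1 < α2) :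
    ∀ t2 : ℝ, 0 < t2 → t2 < α1 →
      ∃ θ : ℝ, 0 ≤ θ ∧ θ ≤ 1 ∧
        Ebim p1 p2 α1 α2 (fun x1 x2 => min x1 (t2 + x2))
          = (1 - θ) * Ebim p1 p2 α1 α2 (fun x1 x2 => min x1 (0 + x2))
            + θ * Ebim p1 p2 α1 α2 (fun x1 x2 => min x1 (α1 + x2)) ∧
        Ebim p1 p2 α1 α2
            (fun x1 x2 => min x1 (t2 + x2) + max (min x1 (t2 + x2) - t2) 0)
          = (1 - θ) * Ebim p1 p2 α1 α2
                (fun x1 x2 => min x1 (0 + x2) + max (min x1 (0 + x2) - 0) 0)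
            + θ * Ebim p1 p2 α1 α2
                (fun x1 x2 => min x1 (α1 + x2) + max (min x1 (α1 + x2) - α1) 0) := by
  intro t2 ht0 ht1
  have hα1 : 0 < α1 := ht0.trans ht1
  obtain ⟨θ, hθ, rfl⟩ : ∃ θ ∈ Icc (0 : ℝ) 1, t2 = (1 - θ) * 0 + θ * α1 :=
    ⟨t2 / α1, ⟨by positivity, (div_le_one hα1).2 ht1.le⟩, by field_simp; ring⟩
  have atom_ge : ∀ x ∈ ({α1, α2} : Set ℝ), α1 ≤ x := by
    rintro x (rfl | rfl) <;> linarith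
  have kink : ∀ x1 ∈ ({α1, α2} : Set ℝ), ∀ x2 ∈ ({α1, α2} : Set ℝ),
      x1 ≤ 0 + x2 ∨ α1 + x2 ≤ x1 := by
    rintro x1 (rfl | rfl) x2 (rfl | rfl) <;> first | (left; linarith) | (right; linarith)
  refine ⟨θ, hθ.1, hθ.2, Ebim_combo_of_atoms fun x1 hx1 x2 hx2 => ?_,
    Ebim_combo_of_atoms fun x1 hx1 x2 hx2 => ?_⟩
  · obtain ⟨m, k, h⟩ := exists_affine_min_add (kink x1 hx1 x2 hx2)
    exact apply_combo_of_affine_on_Icc hα1.le hθ h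
  · obtain ⟨m, k, h⟩ := exists_affine_min_add_add_max
      (by linarith [atom_ge x2 hx2]) (atom_ge x1 hx1) (kink x1 hx1 x2 hx2)
    exact apply_combo_of_affine_on_Icc hα1.le hθ h

/-- Any t2 ∈ (0, α1) is dominated: with 2α1 < α2, both E[T] and E[C] are
affine in t2 on [0, α1], so the point (E[C([0,t2])], E[T([0,t2])]) lies on the
segment between the points of [0,0] and [0,α1]. -/
theorem stmt_10 (α1 α2 p1 p2 : ℝ)
    (hα1 : 0 < α1) (hα : 2 * α1 < α2)
    (hp1 : 0 < p1) (hp1' : p1 < 1) (hp2 : p2 = 1 - p1) :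
    ∀ t2 : ℝ, 0 < t2 → t2 < α1 →
      ∃ θ : ℝ, 0 ≤ θ ∧ θ ≤ 1 ∧
        Ebim p1 p2 α1 α2 (fun x1 x2 => min x1 (t2 + x2))
          = (1 - θ) * Ebim p1 p2 α1 α2 (fun x1 x2 => min x1 (0 + x2))
            + θ * Ebim p1 p2 α1 α2 (fun x1 x2 => min x1 (α1 + x2)) ∧
        Ebim p1 p2 α1 α2
            (fun x1 x2 => min x1 (t2 + x2) + max (min x1 (t2 + x2) - t2) 0)
          = (1 - θ) * Ebim p1 p2 α1 α2
                (fun x1 x2 => min x1 (0 + x2) + max (min x1 (0 + x2) - 0) 0)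
            + θ * Ebim p1 p2 α1 α2
                (fun x1 x2 => min x1 (α1 + x2) + max (min x1 (α1 + x2) - α1) 0) :=
  stmt_10_general α1 α2 p1 p2 hα
end

section
/- (Separation is suboptimal — completion time): Consider two tasks and bimodal machine times with 2α1 < α2 and 0 < p1 < 1. The 'separate' policy runs each task with its own replica at time α2 (policy [0, α2] per task), giving expected overall completion time E[T_s] = p1² α1 + (1 − p1²) α2. The 'joint' policy runs each task on one machine at time 0, and if exactly one task finishes at α1, starts a replica of the unfinished task at time α1; its expected completion time is E[T_d] = p1² α1 + 2p1²(1 − p1)(2α1) + (1 − p1)²(2p1 + 1)α2. Then E[T_d] < E[T_s]. -/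
/- The policies differ only on the event, of probability `2 p² (1 - p)`, that exactly one first
machine is fast and the replica started at `α1` is fast: there the joint policy finishes at
`2 α1` instead of `α2`. -/
theorem separate_sub_joint_completion_time (α1 α2 p : ℝ) :
    (p ^ 2 * α1 + (1 - p ^ 2) * α2)
        - (p ^ 2 * α1 + 2 * p ^ 2 * (1 - p) * (2 * α1) + (1 - p) ^ 2 * (2 * p + 1) * α2)
      = 2 * p ^ 2 * (1 - p) * (α2 - 2 * α1) := by
  ring

theorem stmt_13_general (α1 α2 p1 : ℝ)
    (hα : 2 * α1 < α2)
    (hp1 : 0 < p1) (hp1' : p1 < 1) :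
    p1 ^ 2 * α1 + 2 * p1 ^ 2 * (1 - p1) * (2 * α1)
        + (1 - p1) ^ 2 * (2 * p1 + 1) * α2
      < p1 ^ 2 * α1 + (1 - p1 ^ 2) * α2 := by
  rw [← sub_pos, separate_sub_joint_completion_time]
  have hgap : 0 < α2 - 2 * α1 := sub_pos.2 hα
  have hslow : 0 < 1 - p1 := sub_pos.2 hp1'
  positivity

/-- Separation is suboptimal (completion time): for two tasks with bimodal
machine times, 2α1 < α2 and 0 < p1 < 1, the joint policy has strictly smaller
expected overall completion time than the separate policy:
E[T_d] = p1²α1 + 2p1²(1-p1)(2α1) + (1-p1)²(2p1+1)α2 <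
E[T_s] = p1²α1 + (1-p1²)α2. -/
theorem stmt_13 (α1 α2 p1 : ℝ)
    (hα1 : 0 < α1) (hα : 2 * α1 < α2)
    (hp1 : 0 < p1) (hp1' : p1 < 1) :
    p1 ^ 2 * α1 + 2 * p1 ^ 2 * (1 - p1) * (2 * α1)
        + (1 - p1) ^ 2 * (2 * p1 + 1) * α2
      < p1 ^ 2 * α1 + (1 - p1 ^ 2) * α2 :=
  stmt_13_general α1 α2 p1 hα hp1 hp1'
end

section
/- (Joint strictly dominates separate): If (2p1 − 1)/(4p1 − 1) < α1/α2 < (2p1 − 1)/(3p1 − 1) with 1/2 < p1 < 1 and 2α1 < α2, then the joint two-task policy achieves strictly smaller cost J_λ = λE[T] + (1 − λ)E[C] than the separate policy for every λ ∈ [0, 1]. -/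
/-! Both gaps between the separate and the joint policy factor explicitly:
`E[T_s] - E[T_d] = 2 p₁² (1 - p₁) (α₂ - 2α₁)` and
`E[C_s] - E[C_d] = 2 p₁ (1 - p₁) ((1 + 2p₁)(α₂ - 2α₁) + (3 + p₁) α₁)`,
so the joint policy is strictly better in time and in cost, hence in every convex
combination `J_λ` of the two. -/

lemma convex_combination_lt_convex_combination {a b c d lam : ℝ} (hab : a < b) (hcd : c < d)
    (h0 : 0 ≤ lam) (h1 : lam ≤ 1) :
    lam * a + (1 - lam) * c < lam * b + (1 - lam) * d := by
  nlinarith [mul_le_mul_of_nonneg_left hab.le h0,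
    mul_le_mul_of_nonneg_left hcd.le (sub_nonneg.2 h1)]

section TwoTask

variable {α1 α2 p : ℝ}

lemma joint_time_lt_separate_time (hp : 0 < p) (hp' : p < 1) (hα : 2 * α1 < α2) :
    p ^ 2 * α1 + 4 * p ^ 2 * (1 - p) * α1 + (1 - p) ^ 2 * (2 * p + 1) * α2
      < p ^ 2 * α1 + (1 - p ^ 2) * α2 := by
  rw [← sub_pos,
    show p ^ 2 * α1 + (1 - p ^ 2) * α2
        - (p ^ 2 * α1 + 4 * p ^ 2 * (1 - p) * α1 + (1 - p) ^ 2 * (2 * p + 1) * α2)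
      = 2 * p ^ 2 * (1 - p) * (α2 - 2 * α1) by ring]
  exact mul_pos (mul_pos (by positivity) (sub_pos.2 hp')) (sub_pos.2 hα)

lemma joint_cost_lt_separate_cost (hα1 : 0 < α1) (hp : 0 < p) (hp' : p < 1)
    (hα : 2 * α1 < α2) :
    2 * p ^ 2 * α1 + 6 * p ^ 2 * (1 - p) * α1 + 2 * (1 - p) ^ 2 * (2 * p + 1) * α2
      < 2 * p ^ 2 * α1 + 2 * p * (1 - p) * (α1 + α2) + 2 * (1 - p ^ 2) * α2 := by
  rw [← sub_pos,
    show 2 * p ^ 2 * α1 + 2 * p * (1 - p) * (α1 + α2) + 2 * (1 - p ^ 2) * α2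
        - (2 * p ^ 2 * α1 + 6 * p ^ 2 * (1 - p) * α1 + 2 * (1 - p) ^ 2 * (2 * p + 1) * α2)
      = 2 * p * (1 - p) * ((1 + 2 * p) * (α2 - 2 * α1) + (3 + p) * α1) by ring]
  have hgap : 0 < (1 + 2 * p) * (α2 - 2 * α1) + (3 + p) * α1 :=
    add_pos (mul_pos (by linarith) (sub_pos.2 hα)) (mul_pos (by linarith) hα1)
  exact mul_pos (mul_pos (by positivity) (sub_pos.2 hp')) hgap

end TwoTask

theorem stmt_15_general (α1 α2 p1 : ℝ)
    (hα1 : 0 < α1) (hα : 2 * α1 < α2)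
    (hp1 : 1 / 2 < p1) (hp1' : p1 < 1)
    (ETs ECs ETd ECd : ℝ)
    (hETs : ETs = p1 ^ 2 * α1 + (1 - p1 ^ 2) * α2)
    (hECs : ECs = 2 * p1 ^ 2 * α1 + 2 * p1 * (1 - p1) * (α1 + α2)
                    + 2 * (1 - p1 ^ 2) * α2)
    (hETd : ETd = p1 ^ 2 * α1 + 4 * p1 ^ 2 * (1 - p1) * α1
                    + (1 - p1) ^ 2 * (2 * p1 + 1) * α2)
    (hECd : ECd = 2 * p1 ^ 2 * α1 + 6 * p1 ^ 2 * (1 - p1) * α1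
                    + 2 * (1 - p1) ^ 2 * (2 * p1 + 1) * α2) :
    ∀ lam : ℝ, 0 ≤ lam → lam ≤ 1 →
      lam * ETd + (1 - lam) * ECd < lam * ETs + (1 - lam) * ECs := by
  intro lam h0 h1
  have hp : 0 < p1 := by linarith
  subst hETs hECs hETd hECd
  exact convex_combination_lt_convex_combination (joint_time_lt_separate_time hp hp1' hα)
    (joint_cost_lt_separate_cost hα1 hp hp1' hα) h0 h1

/-- Joint strictly dominates separate: if
(2p1-1)/(4p1-1) < α1/α2 < (2p1-1)/(3p1-1), with 1/2 < p1 < 1 and 2α1 < α2,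
then the joint two-task policy achieves strictly smaller cost
J_λ = λ E[T] + (1-λ) E[C] than the separate policy for every λ ∈ [0,1]. -/
theorem stmt_15 (α1 α2 p1 : ℝ)
    (hα1 : 0 < α1) (hα : 2 * α1 < α2)
    (hp1 : 1 / 2 < p1) (hp1' : p1 < 1)
    (hlow : (2 * p1 - 1) / (4 * p1 - 1) < α1 / α2)
    (hhigh : α1 / α2 < (2 * p1 - 1) / (3 * p1 - 1))
    (ETs ECs ETd ECd : ℝ)
    (hETs : ETs = p1 ^ 2 * α1 + (1 - p1 ^ 2) * α2)
    (hECs : ECs = 2 * p1 ^ 2 * α1 + 2 * p1 * (1 - p1) * (α1 + α2)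
                    + 2 * (1 - p1 ^ 2) * α2)
    (hETd : ETd = p1 ^ 2 * α1 + 4 * p1 ^ 2 * (1 - p1) * α1
                    + (1 - p1) ^ 2 * (2 * p1 + 1) * α2)
    (hECd : ECd = 2 * p1 ^ 2 * α1 + 6 * p1 ^ 2 * (1 - p1) * α1
                    + 2 * (1 - p1) ^ 2 * (2 * p1 + 1) * α2) :
    ∀ lam : ℝ, 0 ≤ lam → lam ≤ 1 →
      lam * ETd + (1 - lam) * ECd < lam * ETs + (1 - lam) * ECs :=
  stmt_15_general α1 α2 p1 hα1 hα hp1 hp1' ETs ECs ETd ECd hETs hECs hETd hECd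
end

section
/- (Replication threshold for a single task, general bimodal): For two machines with bimodal execution time (α1 w.p. p1, α2 w.p. p2 = 1 − p1, 2α1 < α2) and cost J_λ = λE[T] + (1 − λ)E[C], the no-replication policy [0, α2] fails to be optimal among {[0,0],[0,α1],[0,α2]} for λ = 1 (pure completion-time objective) whenever 0 < p1 < 1: both [0,0] and [0,α1] achieve strictly smaller E[T]. -/
/-!
With `p₂ = 1 - p₁`, both gaps to the no-replication policy factor:
`E[T([0,α2])] - E[T([0,0])] = p₁ p₂ (α₂ - α₁)` and
`E[T([0,α2])] - E[T([0,α1])] = p₁ (2 α₁ p₁ + p₂ (α₂ - α₁))`,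
which are positive once `0 ≤ α₁ < α₂` and both outcomes have positive probability.
-/

theorem fullReplication_lt_noReplication {α1 α2 p : ℝ} (hα : α1 < α2) (hp0 : 0 < p) (hp1 : p < 1) :
    α1 * (1 - (1 - p) ^ 2) + α2 * (1 - p) ^ 2 < α1 * p + α2 * (1 - p) := by
  have gap : α1 * p + α2 * (1 - p) - (α1 * (1 - (1 - p) ^ 2) + α2 * (1 - p) ^ 2)
      = p * (1 - p) * (α2 - α1) := by ring
  rw [← sub_pos, gap]
  exact mul_pos (mul_pos hp0 (sub_pos.2 hp1)) (sub_pos.2 hα)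

theorem delayedReplication_lt_noReplication {α1 α2 p : ℝ} (hα1 : 0 ≤ α1) (hα : α1 < α2)
    (hp0 : 0 < p) (hp1 : p < 1) :
    α1 * ((1 - p) - p) * p + α2 * (1 - p) ^ 2 + α1 * p * (1 - p) < α1 * p + α2 * (1 - p) := by
  have gap : α1 * p + α2 * (1 - p) - (α1 * ((1 - p) - p) * p + α2 * (1 - p) ^ 2 + α1 * p * (1 - p))
      = p * (2 * α1 * p + (1 - p) * (α2 - α1)) := by ring
  rw [← sub_pos, gap]
  exact mul_pos hp0 (add_pos_of_nonneg_of_pos (by positivity)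
    (mul_pos (sub_pos.2 hp1) (sub_pos.2 hα)))

/-- Replication threshold for a single task: for λ = 1 (pure completion-time
objective), the no-replication policy [0, α2] is not optimal among
{[0,0],[0,α1],[0,α2]} whenever 0 < p1 < 1: both [0,0] and [0,α1] achieve
strictly smaller expected completion time. -/
theorem stmt_19 (α1 α2 p1 p2 : ℝ)
    (hα1 : 0 < α1) (hα : 2 * α1 < α2)
    (hp1 : 0 < p1) (hp1' : p1 < 1) (hp2 : p2 = 1 - p1)
    (ET00 ET01 ET02 : ℝ)
    (hET00 : ET00 = α1 * (1 - p2 ^ 2) + α2 * p2 ^ 2)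
    (hET01 : ET01 = α1 * (p2 - p1) * p1 + α2 * p2 ^ 2 + α1 * p1 * p2)
    (hET02 : ET02 = α1 * p1 + α2 * p2) :
    ET00 < ET02 ∧ ET01 < ET02 := by
  subst hp2 hET00 hET01 hET02
  have hα12 : α1 < α2 := by linarith
  exact ⟨fullReplication_lt_noReplication hα12 hp1 hp1',
    delayedReplication_lt_noReplication hα1.le hα12 hp1 hp1'⟩
end
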